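/- Let k be a field, n ≥ 2, λ₁,…,λₙ pairwise distinct nonzero elements of k, X = (k^n, k^n; id, diag(λᵢ), cyclic shift) and Y = (k, k; 1, 0, 0). Let M be a representation of the 3-Kronecker quiver fitting in an exact sequence 0 → X^a → M → Y^b → 0 such that Y is not isomorphic to a subrepresentation of M. Then every subrepresentation U of M with dimension vector (n+1, n+1) is indecomposable and fits in an exact sequence 0 → X → U → Y → 0. -/

import Mathlib

/- Condition (C), Case 2: for X = (k^n,k^n; id, diag(λᵢ), shift), Y = (k,k;1,0,0),
   if M fits in an exact sequence 0 → X^a → M → Y^b → 0 and Y does not embed in M,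
   then every subrepresentation U ≤ M of dimension vector (n+1,n+1) is indecomposable
   and fits in an exact sequence 0 → X → U → Y → 0. -/

/-- A representation of the 3-Kronecker quiver. -/
structure Rep3 (k : Type) [Field k] where
  V1 : Type
  V2 : Type
  [grp1 : AddCommGroup V1]
  [grp2 : AddCommGroup V2]
  [mod1 : Module k V1]
  [mod2 : Module k V2]
  a : V1 →ₗ[k] V2
  b : V1 →ₗ[k] V2
  c : V1 →ₗ[k] V2

attribute [instance] Rep3.grp1 Rep3.grp2 Rep3.mod1 Rep3.mod2

/-- Morphisms of 3-Kronecker representations. -/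
def IsHom3 (k : Type) [Field k] (R S : Rep3 k)
    (f₁ : R.V1 →ₗ[k] S.V1) (f₂ : R.V2 →ₗ[k] S.V2) : Prop :=
  f₂.comp R.a = S.a.comp f₁ ∧ f₂.comp R.b = S.b.comp f₁ ∧ f₂.comp R.c = S.c.comp f₁

def kroneckerBeta (k : Type) [Field k] (n : ℕ) (l : Fin n → k) :
    (Fin n → k) →ₗ[k] (Fin n → k) where
  toFun v i := l i * v i
  map_add' u v := by funext i; simp [mul_add]
  map_smul' c v := by funext i; simp; ring

def kroneckerGamma (k : Type) [Field k] (n : ℕ) :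
    (Fin n → k) →ₗ[k] (Fin n → k) where
  toFun v i := v ((finRotate n).symm i)
  map_add' u v := rfl
  map_smul' c v := rfl

/-- The representation X = (k^n, k^n; id, diag(λᵢ), cyclic shift). -/
def repX (k : Type) [Field k] (n : ℕ) (l : Fin n → k) : Rep3 k where
  V1 := Fin n → k
  V2 := Fin n → k
  a := LinearMap.id
  b := kroneckerBeta k n l
  c := kroneckerGamma k n

/-- The representation Y = (k, k; 1, 0, 0). -/
def repY (k : Type) [Field k] : Rep3 k where
  V1 := k
  V2 := k
  a := LinearMap.id
  b := 0
  c := 0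

/-- The direct sum of m copies of a representation. -/
def pow3 (k : Type) [Field k] (R : Rep3 k) (m : ℕ) : Rep3 k where
  V1 := Fin m → R.V1
  V2 := Fin m → R.V2
  a := LinearMap.pi fun j => R.a.comp (LinearMap.proj j)
  b := LinearMap.pi fun j => R.b.comp (LinearMap.proj j)
  c := LinearMap.pi fun j => R.c.comp (LinearMap.proj j)

/-!
`M.a` is injective, being so on `X^a` and on `Y^b`; hence `U₂ = a(U₁)` and `U` is the space `U₁`
with the two operators `B = a⁻¹b`, `C = a⁻¹c`. As `b` and `c` vanish on `Y^b`, `B` and `C` map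
`U₁` into `V = U₁ ∩ X^a`, and they have no common kernel since `Y` does not embed in `M`.
Viewing `X^a` as `X ⊗ k^a`, a subspace stable under `diag(λ) ⊗ 1` and `shift ⊗ 1` is `k^n ⊗ E`:
Lagrange interpolation in the distinct `λᵢ` splits it into coordinate slices, and the shift maps
each slice into the next, so around the cycle they all agree. From `0 < dim V ≤ n + 1 < 2n` we
get `dim E = 1`, so `V ≅ X` has codimension one in `U₁`, and the quotient is `U → Y`.
Finally `End(X) = k`, every endomorphism of `U` preserves `V = C(V)`, and one vanishing on `V`
is zero because its image is killed by `B` and `C`; so `End(U) = k` and `U` is indecomposable.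
-/

open Polynomial Module

theorem Fin.apply_eq_apply_zero_of_le_finRotate {α : Type*} [PartialOrder α] {n : ℕ}
    {g : Fin (n + 1) → α}
    (h : ∀ i, g i ≤ g (finRotate (n + 1) i)) (i : Fin (n + 1)) : g i = g 0 := by
  have hmono : Monotone g := Fin.monotone_iff_le_succ.2 fun i => by
    simpa [finRotate_apply] using h i.castSucc
  exact le_antisymm ((hmono (Fin.le_last i)).trans (by simpa using h (Fin.last n)))
    (hmono (Fin.zero_le i))

lemma LinearMap.ker_le_comap_ker_of_commute {k V : Type*} [Field k] [AddCommGroup V] [Module k V]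
    {f g : Module.End k V} (h : Commute f g) : LinearMap.ker f ≤ (LinearMap.ker f).comap g := by
  intro x hx
  rw [Submodule.mem_comap, LinearMap.mem_ker, ← Module.End.mul_apply, h.eq,
    Module.End.mul_apply, LinearMap.mem_ker.1 hx, map_zero]

lemma Submodule.exists_surjective_ker_eq {k V : Type*} [Field k] [AddCommGroup V] [Module k V]
    [FiniteDimensional k V] (p : Submodule k V) (h : finrank k p + 1 = finrank k V) :
    ∃ q : V →ₗ[k] k, Function.Surjective q ∧ LinearMap.ker q = p := by
  obtain ⟨e⟩ : Nonempty ((V ⧸ p) ≃ₗ[k] k) := FiniteDimensional.nonempty_linearEquiv_of_finrank_eq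
    (by have := p.finrank_quotient_add_finrank; rw [finrank_self]; omega)
  refine ⟨e.toLinearMap ∘ₗ p.mkQ, e.surjective.comp p.mkQ_surjective, ?_⟩
  rw [LinearMap.ker_comp, LinearEquiv.ker, Submodule.comap_bot, Submodule.ker_mkQ]

lemma IsHom3.comp {k : Type} [Field k] {R S T : Rep3 k}
    {f₁ : R.V1 →ₗ[k] S.V1} {f₂ : R.V2 →ₗ[k] S.V2}
    {g₁ : S.V1 →ₗ[k] T.V1} {g₂ : S.V2 →ₗ[k] T.V2} (hg : IsHom3 k S T g₁ g₂)
    (hf : IsHom3 k R S f₁ f₂) : IsHom3 k R T (g₁ ∘ₗ f₁) (g₂ ∘ₗ f₂) := by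
  obtain ⟨hfa, hfb, hfc⟩ := hf
  obtain ⟨hga, hgb, hgc⟩ := hg
  refine ⟨?_, ?_, ?_⟩
  · rw [LinearMap.comp_assoc, hfa, ← LinearMap.comp_assoc f₁, hga, LinearMap.comp_assoc]
  · rw [LinearMap.comp_assoc, hfb, ← LinearMap.comp_assoc f₁, hgb, LinearMap.comp_assoc]
  · rw [LinearMap.comp_assoc, hfc, ← LinearMap.comp_assoc f₁, hgc, LinearMap.comp_assoc]

section Tensor

variable {k W : Type*} [Field k] [AddCommGroup W] [Module k W] {n : ℕ}

def diagSMul (l : Fin n → k) : (Fin n → W) →ₗ[k] (Fin n → W) := Algebra.lsmul k k (Fin n → W) l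

def cycShift : (Fin n → W) →ₗ[k] (Fin n → W) := LinearMap.funLeft k W (finRotate n).symm

@[simp] lemma diagSMul_apply (l : Fin n → k) (v : Fin n → W) (i : Fin n) :
    diagSMul l v i = l i • v i := rfl

@[simp] lemma cycShift_apply (v : Fin n → W) (i : Fin n) :
    cycShift (k := k) v i = v ((finRotate n).symm i) := rfl

lemma Pi.aeval_apply (l : Fin n → k) (p : k[X]) (j : Fin n) : aeval l p j = p.eval (l j) := by
  change Pi.evalAlgHom k (fun _ => k) j (aeval l p) = _
  rw [← aeval_algHom_apply, coe_aeval_eq_eval]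
  rfl

lemma single_mem_of_le_comap_diagSMul {l : Fin n → k} (hl : Function.Injective l)
    {V : Submodule k (Fin n → W)} (hV : V ≤ V.comap (diagSMul l)) {v : Fin n → W} (hv : v ∈ V)
    (i : Fin n) : Pi.single i (v i) ∈ V := by
  have key := aeval_apply_smul_mem_of_le_comap' hv (Lagrange.basis Finset.univ l i) l hV
  convert key using 1
  ext j
  rw [Pi.smul_apply', Pi.aeval_apply]
  rcases eq_or_ne j i with rfl | hji
  · rw [Lagrange.eval_basis_self hl.injOn (Finset.mem_univ _), one_smul, Pi.single_eq_same]
  · rw [Lagrange.eval_basis_of_ne hji.symm (Finset.mem_univ _), zero_smul, Pi.single_eq_of_ne hji]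

lemma Submodule.finrank_pi_univ_const [FiniteDimensional k W] (ι : Type*) [Fintype ι]
    (E : Submodule k W) :
    finrank k (Submodule.pi Set.univ fun _ : ι => E) = Fintype.card ι * finrank k E := by
  have hinj : Function.Injective (E.subtype.compLeft ι) :=
    fun f g h => funext fun i => Subtype.ext (congrFun h i)
  have := LinearMap.finrank_range_of_inj hinj
  rw [LinearMap.range_compLeft, Submodule.range_subtype, Module.finrank_pi_fintype] at this
  rw [this, Finset.sum_const, smul_eq_mul, Finset.card_univ]

lemma eq_pi_map_proj_zero_of_le_comap {l : Fin (n + 1) → k} (hl : Function.Injective l)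
    {V : Submodule k (Fin (n + 1) → W)} (hD : V ≤ V.comap (diagSMul l))
    (hR : V ≤ V.comap cycShift) :
    V = Submodule.pi Set.univ fun _ => V.map (LinearMap.proj 0) := by
  have hcol : ∀ i, V.map (LinearMap.proj i) = V.map (LinearMap.proj 0) :=
    Fin.apply_eq_apply_zero_of_le_finRotate fun i => by
      rintro _ ⟨v, hv, rfl⟩
      exact ⟨cycShift v, hR hv, by simp⟩
  ext v
  refine ⟨fun hv i _ => hcol i ▸ ⟨v, hv, rfl⟩, fun hv => ?_⟩
  rw [← Finset.univ_sum_single v]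
  refine V.sum_mem fun i _ => ?_
  obtain ⟨u, hu, hui⟩ := hcol i ▸ hv i trivial
  rw [← hui]
  exact single_mem_of_le_comap_diagSMul hl hD hu i

lemma exists_eq_range_compLeft_toSpanSingleton [FiniteDimensional k W] {l : Fin (n + 1) → k}
    (hl : Function.Injective l) {V : Submodule k (Fin (n + 1) → W)}
    (hD : V ≤ V.comap (diagSMul l)) (hR : V ≤ V.comap cycShift) (hV : V ≠ ⊥)
    (hdim : finrank k V < 2 * (n + 1)) :
    ∃ w : W, w ≠ 0 ∧ V = LinearMap.range ((LinearMap.toSpanSingleton k W w).compLeft _) := by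
  set E := V.map (LinearMap.proj 0)
  have hVE := eq_pi_map_proj_zero_of_le_comap hl hD hR
  have hdimVE : finrank k V = (n + 1) * finrank k E := by
    rw [hVE, Submodule.finrank_pi_univ_const, Fintype.card_fin]
  have hE : finrank k E = 1 := by
    have : finrank k V ≠ 0 := Submodule.finrank_eq_zero.not.2 hV
    rw [hdimVE] at this hdim
    have := right_ne_zero_of_mul this
    have : finrank k E < 2 := Nat.lt_of_mul_lt_mul_left (by rwa [mul_comm 2] at hdim)
    omega
  obtain ⟨w, hwE, hw⟩ := Submodule.exists_mem_ne_zero_of_ne_bot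
    (Submodule.one_le_finrank_iff.1 hE.ge)
  have hEw : k ∙ w = E := Submodule.eq_of_le_of_finrank_eq
    (Submodule.span_le.2 (Set.singleton_subset_iff.2 hwE)) (by rw [finrank_span_singleton hw, hE])
  refine ⟨w, hw, ?_⟩
  rw [LinearMap.range_compLeft, LinearMap.range_toSpanSingleton, hEw]
  exact hVE

end Tensor

/-- The representation `X ⊗ W`; the power `X^m` is `X ⊗ kᵐ` via `LinearEquiv.piComm`. -/
def repXTensor {k : Type} [Field k] {n : ℕ} (l : Fin n → k) (W : Type) [AddCommGroup W]
    [Module k W] : Rep3 k where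
  V1 := Fin n → W
  V2 := Fin n → W
  a := LinearMap.id
  b := diagSMul l
  c := cycShift

def LinearEquiv.piComm (R : Type*) [Semiring R] (ι ι' M : Type*) [AddCommMonoid M]
    [Module R M] : (ι → ι' → M) ≃ₗ[R] (ι' → ι → M) :=
  { Equiv.piComm fun _ _ => M with
    map_add' := fun _ _ => rfl
    map_smul' := fun _ _ => rfl }

lemma isHom3_piComm {k : Type} [Field k] {n : ℕ} (l : Fin n → k) (m : ℕ) :
    IsHom3 k (repXTensor l (Fin m → k)) (pow3 k (repX k n l) m)
      (LinearEquiv.piComm k (Fin n) (Fin m) k).toLinearMap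
      (LinearEquiv.piComm k (Fin n) (Fin m) k).toLinearMap :=
  ⟨rfl, rfl, rfl⟩

section Kronecker

variable {k : Type} [Field k] {n : ℕ}

lemma kroneckerBeta_eq_diagSMul (l : Fin n → k) : kroneckerBeta k n l = diagSMul l := rfl

lemma apply_single_eq_smul_of_commute {l : Fin n → k} (hl : Function.Injective l)
    {f : Module.End k (Fin n → k)} (hf : Commute f (kroneckerBeta k n l)) (i : Fin n) :
    f (Pi.single i 1) = f (Pi.single i 1) i • Pi.single i 1 := by
  have hβi : diagSMul l (Pi.single i (1 : k)) = l i • Pi.single i 1 := by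
    ext j; rcases eq_or_ne j i with rfl | h <;> simp [*]
  ext j
  rcases eq_or_ne j i with rfl | hji
  · simp
  · have h := congrFun (congrArg (· (Pi.single i 1)) hf.eq) j
    simp only [Module.End.mul_apply, kroneckerBeta_eq_diagSMul, hβi, map_smul, Pi.smul_apply,
      diagSMul_apply, smul_eq_mul] at h
    have : (l i - l j) * f (Pi.single i 1) j = 0 := by rw [sub_mul, h, sub_self]
    simpa [hji, sub_eq_zero, hl.eq_iff, Ne.symm hji] using this

theorem exists_eq_smul_one_of_commute {l : Fin (n + 1) → k} (hl : Function.Injective l)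
    {f : Module.End k (Fin (n + 1) → k)} (hβ : Commute f (kroneckerBeta k _ l))
    (hγ : Commute f (kroneckerGamma k _)) : ∃ μ : k, f = μ • 1 := by
  -- `ker (f - μ)` is a subrepresentation of `X` containing `Pi.single 0 1`, hence all of `X`.
  set μ := f (Pi.single 0 1) 0
  have hμ : Commute (f - μ • 1) (kroneckerBeta k _ l) ∧ Commute (f - μ • 1) (kroneckerGamma k _) :=
    ⟨hβ.sub_left ((Commute.one_left _).smul_left μ), hγ.sub_left ((Commute.one_left _).smul_left μ)⟩
  have hK := eq_pi_map_proj_zero_of_le_comap hl (LinearMap.ker_le_comap_ker_of_commute hμ.1)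
    (LinearMap.ker_le_comap_ker_of_commute hμ.2)
  have h0 : Pi.single 0 1 ∈ LinearMap.ker (f - μ • 1) := by
    rw [LinearMap.mem_ker, LinearMap.sub_apply, apply_single_eq_smul_of_commute hl hβ]
    exact sub_self _
  have hcol : (LinearMap.ker (f - μ • 1)).map (LinearMap.proj 0) = ⊤ :=
    eq_top_iff.2 fun c _ => ⟨c • Pi.single 0 1, Submodule.smul_mem _ c h0, by simp⟩
  refine ⟨μ, sub_eq_zero.1 (LinearMap.ker_eq_top.1 ?_)⟩
  rw [hK, hcol, Submodule.pi_top]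

end Kronecker

section TwoOperators

variable {k : Type} [Field k] {n : ℕ} {V : Type*} [AddCommGroup V] [Module k V]
  {B C : Module.End k V}

lemma commute_of_intertwine {P : Type*} [AddCommGroup P] [Module k P] {j : P →ₗ[k] V}
    (hj : Function.Injective j) {f g : Module.End k P} {e G : Module.End k V}
    (hf : j ∘ₗ f = e ∘ₗ j) (hg : j ∘ₗ g = G ∘ₗ j) (h : Commute e G) : Commute f g := by
  refine LinearMap.ext fun x => hj ?_
  have hf' := LinearMap.congr_fun hf
  have hg' := LinearMap.congr_fun hg
  simp only [LinearMap.comp_apply] at hf' hg'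
  simp only [Module.End.mul_apply, hf', hg']
  exact LinearMap.congr_fun h.eq (j x)

lemma eq_zero_of_comp_eq_zero_of_range_le {P : Type*} [AddCommGroup P] [Module k P] {j : P →ₗ[k] V}
    (hBC : ∀ x, B x = 0 → C x = 0 → x = 0)
    (hB : LinearMap.range B ≤ LinearMap.range j) (hC : LinearMap.range C ≤ LinearMap.range j)
    {e : Module.End k V} (heB : Commute e B) (heC : Commute e C) (hej : e ∘ₗ j = 0) : e = 0 := by
  have hvan : ∀ x ∈ LinearMap.range j, e x = 0 := by
    rintro _ ⟨y, rfl⟩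
    exact LinearMap.congr_fun hej y
  ext x
  refine hBC _ ?_ ?_
  · rw [← Module.End.mul_apply, ← heB.eq, Module.End.mul_apply]
    exact hvan _ (hB ⟨x, rfl⟩)
  · rw [← Module.End.mul_apply, ← heC.eq, Module.End.mul_apply]
    exact hvan _ (hC ⟨x, rfl⟩)

theorem exists_eq_smul_one_of_commute_of_embedding {l : Fin (n + 1) → k}
    (hl : Function.Injective l) {j : (Fin (n + 1) → k) →ₗ[k] V} (hj : Function.Injective j)
    (hjβ : j ∘ₗ kroneckerBeta k _ l = B ∘ₗ j) (hjγ : j ∘ₗ kroneckerGamma k _ = C ∘ₗ j)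
    (hBC : ∀ x, B x = 0 → C x = 0 → x = 0)
    (hB : LinearMap.range B ≤ LinearMap.range j) (hC : LinearMap.range C ≤ LinearMap.range j)
    {e : Module.End k V} (heB : Commute e B) (heC : Commute e C) : ∃ μ : k, e = μ • 1 := by
  have hej : LinearMap.range (e ∘ₗ j) ≤ LinearMap.range j := by
    rintro _ ⟨x, rfl⟩
    obtain ⟨y, rfl⟩ :=
      LinearMap.funLeft_surjective_of_injective k k _ (finRotate _).symm.injective x
    change e (j (kroneckerGamma k _ y)) ∈ _
    rw [← LinearMap.comp_apply j, hjγ, LinearMap.comp_apply, ← Module.End.mul_apply, heC.eq]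
    exact hC ⟨_, rfl⟩
  obtain ⟨r, hr⟩ := j.exists_leftInverse_of_injective (LinearMap.ker_eq_bot.2 hj)
  set f : Module.End k (Fin (n + 1) → k) := r ∘ₗ e ∘ₗ j
  have hjf : j ∘ₗ f = e ∘ₗ j := by
    refine LinearMap.ext fun x => ?_
    obtain ⟨y, hy⟩ := hej ⟨x, rfl⟩
    rw [LinearMap.comp_apply] at hy
    simp only [f, LinearMap.comp_apply, ← hy, ← LinearMap.comp_apply r j, hr, LinearMap.id_apply]
  obtain ⟨μ, hμ⟩ := exists_eq_smul_one_of_commute hl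
    (commute_of_intertwine hj hjf hjβ heB) (commute_of_intertwine hj hjf hjγ heC)
  refine ⟨μ, sub_eq_zero.1 (eq_zero_of_comp_eq_zero_of_range_le hBC hB hC
    (heB.sub_left ((Commute.one_left _).smul_left μ))
    (heC.sub_left ((Commute.one_left _).smul_left μ)) ?_)⟩
  rw [LinearMap.sub_comp, ← hjf, hμ]
  ext x
  simp

end TwoOperators

namespace Rep3

variable {k : Type} [Field k]

lemma pow3_a_injective {R : Rep3 k} (hR : Function.Injective R.a) (m : ℕ) :
    Function.Injective (pow3 k R m).a :=
  fun _ _ h => funext fun i => hR (congrFun h i)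

lemma a_injective_of_exact {R M S : Rep3 k} {ι₁ : R.V1 →ₗ[k] M.V1} {ι₂ : R.V2 →ₗ[k] M.V2}
    {π₁ : M.V1 →ₗ[k] S.V1} {π₂ : M.V2 →ₗ[k] S.V2} (hι : IsHom3 k R M ι₁ ι₂)
    (hι₂ : Function.Injective ι₂) (hπ : IsHom3 k M S π₁ π₂)
    (hexact : LinearMap.ker π₁ = LinearMap.range ι₁) (hR : Function.Injective R.a)
    (hS : Function.Injective S.a) : Function.Injective M.a := by
  refine (injective_iff_map_eq_zero _).2 fun x hx => ?_
  have hπx : π₁ x ∈ LinearMap.ker S.a := by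
    rw [LinearMap.mem_ker, ← LinearMap.comp_apply, ← hπ.1, LinearMap.comp_apply, hx, map_zero]
  rw [LinearMap.ker_eq_bot.2 hS, Submodule.mem_bot, ← LinearMap.mem_ker, hexact] at hπx
  obtain ⟨u, rfl⟩ := hπx
  have hu : ι₂ (R.a u) = 0 := by rw [← LinearMap.comp_apply, hι.1, LinearMap.comp_apply, hx]
  rw [hR ((map_eq_zero_iff _ hι₂).1 hu |>.trans (map_zero R.a).symm), map_zero]

lemma range_b_le_of_isHom3_pow3_repY {M : Rep3 k} {m : ℕ} {π₁ : M.V1 →ₗ[k] (pow3 k (repY k) m).V1}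
    {π₂ : M.V2 →ₗ[k] (pow3 k (repY k) m).V2} (hπ : IsHom3 k M (pow3 k (repY k) m) π₁ π₂) :
    LinearMap.range M.b ≤ LinearMap.ker π₂ := by
  rintro _ ⟨x, rfl⟩
  rw [LinearMap.mem_ker, ← LinearMap.comp_apply, hπ.2.1]
  rfl

lemma range_c_le_of_isHom3_pow3_repY {M : Rep3 k} {m : ℕ} {π₁ : M.V1 →ₗ[k] (pow3 k (repY k) m).V1}
    {π₂ : M.V2 →ₗ[k] (pow3 k (repY k) m).V2} (hπ : IsHom3 k M (pow3 k (repY k) m) π₁ π₂) :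
    LinearMap.range M.c ≤ LinearMap.ker π₂ := by
  rintro _ ⟨x, rfl⟩
  rw [LinearMap.mem_ker, ← LinearMap.comp_apply, hπ.2.2]
  rfl

/-- A vector killed by `b` and `c` spans a copy of `Y` inside `M`. -/
lemma eq_zero_of_b_eq_zero_of_c_eq_zero {M : Rep3 k}
    (hY : ¬ ∃ (g₁ : (repY k).V1 →ₗ[k] M.V1) (g₂ : (repY k).V2 →ₗ[k] M.V2),
      IsHom3 k (repY k) M g₁ g₂ ∧ Function.Injective g₁ ∧ Function.Injective g₂)
    (ha : Function.Injective M.a) {v : M.V1} (hb : M.b v = 0) (hc : M.c v = 0) : v = 0 := by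
  by_contra hv
  refine hY ⟨LinearMap.toSpanSingleton k _ v, LinearMap.toSpanSingleton k _ (M.a v),
    ⟨?_, ?_, ?_⟩, smul_left_injective k hv, smul_left_injective k ((map_ne_zero_iff _ ha).2 hv)⟩
  · exact LinearMap.ext_ring (show (1 : k) • M.a v = M.a ((1 : k) • v) by simp)
  · exact LinearMap.ext_ring (show (0 : k) • M.a v = M.b ((1 : k) • v) by simp [hb])
  · exact LinearMap.ext_ring (show (0 : k) • M.a v = M.c ((1 : k) • v) by simp [hc])

def restrict (M : Rep3 k) {U₁ : Submodule k M.V1} {U₂ : Submodule k M.V2}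
    (hUa : ∀ x ∈ U₁, M.a x ∈ U₂) (hUb : ∀ x ∈ U₁, M.b x ∈ U₂) (hUc : ∀ x ∈ U₁, M.c x ∈ U₂) :
    Rep3 k where
  V1 := U₁
  V2 := U₂
  a := M.a.restrict hUa
  b := M.b.restrict hUb
  c := M.c.restrict hUc

section Restrict

variable {M : Rep3 k} {U₁ : Submodule k M.V1} {U₂ : Submodule k M.V2}
  {hUa : ∀ x ∈ U₁, M.a x ∈ U₂} {hUb : ∀ x ∈ U₁, M.b x ∈ U₂} {hUc : ∀ x ∈ U₁, M.c x ∈ U₂}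

lemma restrict_a_bijective [FiniteDimensional k M.V1] [FiniteDimensional k M.V2]
    (ha : Function.Injective M.a) (hd : finrank k U₁ = finrank k U₂) :
    Function.Bijective (M.restrict hUa hUb hUc).a := by
  have hinj : Function.Injective (M.restrict hUa hUb hUc).a :=
    fun x y h => Subtype.ext (ha (congrArg Subtype.val h))
  exact ⟨hinj, (LinearMap.injective_iff_surjective_of_finrank_eq_finrank hd).1 hinj⟩

lemma mem_of_a_mem (ha : Function.Injective M.a)
    (hU : Function.Surjective (M.restrict hUa hUb hUc).a) {z : M.V1} (hz : M.a z ∈ U₂) :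
    z ∈ U₁ := by
  obtain ⟨x, hx⟩ := hU ⟨M.a z, hz⟩
  rw [← ha (congrArg Subtype.val hx)]
  exact x.2

end Restrict

section BijectiveA

variable (U : Rep3 k) (hU : Function.Bijective U.a)

noncomputable def aEquiv : U.V1 ≃ₗ[k] U.V2 := LinearEquiv.ofBijective U.a hU

@[simp] lemma aEquiv_apply (x : U.V1) : U.aEquiv hU x = U.a x := rfl

/-- A representation whose arrow `a` is invertible is a space with the two operators
`a⁻¹ b` and `a⁻¹ c`. -/
noncomputable def aInvComp (f : U.V1 →ₗ[k] U.V2) : Module.End k U.V1 :=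
  (U.aEquiv hU).symm.toLinearMap ∘ₗ f

variable {U}

@[simp] lemma a_aInvComp_apply (f : U.V1 →ₗ[k] U.V2) (x : U.V1) :
    U.a (U.aInvComp hU f x) = f x :=
  (U.aEquiv hU).apply_symm_apply (f x)

lemma commute_aInvComp {e₁ : Module.End k U.V1} {e₂ : Module.End k U.V2}
    (ha : e₂ ∘ₗ U.a = U.a ∘ₗ e₁) {f : U.V1 →ₗ[k] U.V2} (hf : e₂ ∘ₗ f = f ∘ₗ e₁) :
    Commute e₁ (U.aInvComp hU f) := by
  refine LinearMap.ext fun x => hU.1 ?_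
  change U.a (e₁ (U.aInvComp hU f x)) = U.a (U.aInvComp hU f (e₁ x))
  rw [a_aInvComp_apply, ← LinearMap.comp_apply U.a e₁, ← ha, LinearMap.comp_apply,
    a_aInvComp_apply, ← LinearMap.comp_apply e₂, hf, LinearMap.comp_apply]

lemma aInvComp_eq_zero_iff (f : U.V1 →ₗ[k] U.V2) (x : U.V1) :
    U.aInvComp hU f x = 0 ↔ f x = 0 := by
  rw [← a_aInvComp_apply hU f x, map_eq_zero_iff _ hU.1]

variable {n : ℕ} {j₁ : (Fin n → k) →ₗ[k] U.V1} {j₂ : (Fin n → k) →ₗ[k] U.V2}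

lemma comp_eq_aInvComp_comp (hj : j₂ = U.a ∘ₗ j₁) {g : Module.End k (Fin n → k)}
    {f : U.V1 →ₗ[k] U.V2} (h : j₂ ∘ₗ g = f ∘ₗ j₁) : j₁ ∘ₗ g = U.aInvComp hU f ∘ₗ j₁ := by
  refine LinearMap.ext fun x => hU.1 ?_
  have := LinearMap.congr_fun h x
  rw [hj] at this
  simpa using this

lemma range_aInvComp_le (hj : j₂ = U.a ∘ₗ j₁) {f : U.V1 →ₗ[k] U.V2}
    (h : LinearMap.range f ≤ LinearMap.range j₂) :
    LinearMap.range (U.aInvComp hU f) ≤ LinearMap.range j₁ := by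
  rintro _ ⟨x, rfl⟩
  obtain ⟨e, he⟩ := h ⟨x, rfl⟩
  refine ⟨e, hU.1 ?_⟩
  rw [← a_aInvComp_apply hU f x] at he
  rw [← he, hj, LinearMap.comp_apply]

end BijectiveA

lemma eq_smul_one_of_comp_a {U : Rep3 k} (hU : Function.Surjective U.a)
    {e₁ : Module.End k U.V1} {e₂ : Module.End k U.V2}
    (ha : e₂ ∘ₗ U.a = U.a ∘ₗ e₁) {μ : k} (he₁ : e₁ = μ • 1) : e₂ = μ • 1 := by
  refine LinearMap.ext fun y => ?_
  obtain ⟨x, rfl⟩ := hU y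
  rw [← LinearMap.comp_apply e₂, ha, he₁]
  simp

theorem exists_eq_smul_one_of_isHom3 {U : Rep3 k} (hU : Function.Bijective U.a) {n : ℕ}
    {l : Fin (n + 1) → k} (hl : Function.Injective l)
    {j₁ : (Fin (n + 1) → k) →ₗ[k] U.V1} {j₂ : (Fin (n + 1) → k) →ₗ[k] U.V2}
    (hj : IsHom3 k (repX k _ l) U j₁ j₂) (hj₁ : Function.Injective j₁)
    (hb : LinearMap.range U.b ≤ LinearMap.range j₂) (hc : LinearMap.range U.c ≤ LinearMap.range j₂)
    (hbc : ∀ x, U.b x = 0 → U.c x = 0 → x = 0)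
    {e₁ : Module.End k U.V1} {e₂ : Module.End k U.V2} (he : IsHom3 k U U e₁ e₂) :
    ∃ μ : k, e₁ = μ • 1 ∧ e₂ = μ • 1 := by
  obtain ⟨μ, hμ⟩ := exists_eq_smul_one_of_commute_of_embedding hl hj₁
    (comp_eq_aInvComp_comp hU hj.1 hj.2.1) (comp_eq_aInvComp_comp hU hj.1 hj.2.2)
    (fun x hB hC => hbc x ((aInvComp_eq_zero_iff hU _ _).1 hB) ((aInvComp_eq_zero_iff hU _ _).1 hC))
    (range_aInvComp_le hU hj.1 hb) (range_aInvComp_le hU hj.1 hc)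
    (commute_aInvComp hU he.1 he.2.1) (commute_aInvComp hU he.1 he.2.2)
  exact ⟨μ, hμ, eq_smul_one_of_comp_a hU.2 he.1 hμ⟩

theorem isHom3_idempotent_eq_zero_or_id {U : Rep3 k} (hU : Function.Bijective U.a) {n : ℕ}
    {l : Fin (n + 1) → k} (hl : Function.Injective l)
    {j₁ : (Fin (n + 1) → k) →ₗ[k] U.V1} {j₂ : (Fin (n + 1) → k) →ₗ[k] U.V2}
    (hj : IsHom3 k (repX k _ l) U j₁ j₂) (hj₁ : Function.Injective j₁)
    (hb : LinearMap.range U.b ≤ LinearMap.range j₂) (hc : LinearMap.range U.c ≤ LinearMap.range j₂)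
    (hbc : ∀ x, U.b x = 0 → U.c x = 0 → x = 0)
    {e₁ : Module.End k U.V1} {e₂ : Module.End k U.V2} (he : IsHom3 k U U e₁ e₂)
    (he₁ : e₁ ∘ₗ e₁ = e₁) :
    (e₁ = 0 ∧ e₂ = 0) ∨ (e₁ = LinearMap.id ∧ e₂ = LinearMap.id) := by
  obtain ⟨μ, rfl, rfl⟩ := exists_eq_smul_one_of_isHom3 hU hl hj hj₁ hb hc hbc he
  have hv : j₁ (Pi.single 0 1) ≠ 0 :=
    (map_ne_zero_iff _ hj₁).2 (Pi.single_ne_zero_iff.2 one_ne_zero)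
  have hμ : IsIdempotentElem μ := smul_left_injective k hv (by
    simpa [mul_smul] using LinearMap.congr_fun he₁ (j₁ (Pi.single 0 1)))
  rcases IsIdempotentElem.iff_eq_zero_or_one.1 hμ with rfl | rfl <;> simp [Module.End.one_eq_id]

theorem exists_exact_of_isHom3_repX {U : Rep3 k} (hU : Function.Bijective U.a)
    [FiniteDimensional k U.V1] {n : ℕ} {l : Fin n → k}
    {j₁ : (Fin n → k) →ₗ[k] U.V1} {j₂ : (Fin n → k) →ₗ[k] U.V2}
    (hj : IsHom3 k (repX k n l) U j₁ j₂) (hj₁ : Function.Injective j₁)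
    (hb : LinearMap.range U.b ≤ LinearMap.range j₂) (hc : LinearMap.range U.c ≤ LinearMap.range j₂)
    (hdim : finrank k U.V1 = n + 1) :
    ∃ (q₁ : U.V1 →ₗ[k] (repY k).V1) (q₂ : U.V2 →ₗ[k] (repY k).V2),
      IsHom3 k U (repY k) q₁ q₂ ∧ Function.Injective j₂ ∧
      Function.Surjective q₁ ∧ Function.Surjective q₂ ∧
      LinearMap.ker q₁ = LinearMap.range j₁ ∧ LinearMap.ker q₂ = LinearMap.range j₂ := by
  have hj₂ : j₂ = U.a ∘ₗ j₁ := hj.1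
  obtain ⟨q, hq, hker⟩ := (LinearMap.range j₁).exists_surjective_ker_eq
    (by rw [LinearMap.finrank_range_of_inj hj₁, Module.finrank_fin_fun, hdim])
  have hvan : ∀ {f : U.V1 →ₗ[k] U.V2}, LinearMap.range f ≤ LinearMap.range j₂ →
      q ∘ₗ (U.aEquiv hU).symm.toLinearMap ∘ₗ f = 0 := fun hf => LinearMap.ext fun x => by
    have := range_aInvComp_le hU hj₂ hf ⟨x, rfl⟩
    rwa [← hker] at this
  have hker₂ : LinearMap.ker (q ∘ₗ (U.aEquiv hU).symm.toLinearMap) = LinearMap.range j₂ := by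
    rw [LinearMap.ker_comp, hker, Submodule.comap_equiv_eq_map_symm, LinearEquiv.symm_symm,
      ← LinearMap.range_comp, hj₂]
    rfl
  refine ⟨q, q ∘ₗ (U.aEquiv hU).symm.toLinearMap, ⟨?_, (hvan hb).trans rfl, (hvan hc).trans rfl⟩,
    hj₂ ▸ hU.1.comp hj₁, hq, hq.comp (U.aEquiv hU).symm.surjective, hker, hker₂⟩
  refine LinearMap.ext fun x => ?_
  change q ((U.aEquiv hU).symm (U.a x)) = q x
  rw [← U.aEquiv_apply hU, LinearEquiv.symm_apply_apply]

section Preimage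

variable {M : Rep3 k} {P : Type*} [AddCommGroup P] [Module k P] {ι₁ : P →ₗ[k] M.V1}
  {ι₂ : P →ₗ[k] M.V2} {U₁ : Submodule k M.V1} {U₂ : Submodule k M.V2}

lemma comap_le_comap_comap (hU : ∀ z, M.a z ∈ U₂ → z ∈ U₁) (hι : M.a ∘ₗ ι₁ = ι₂)
    {F : M.V1 →ₗ[k] M.V2} (hF : ∀ x ∈ U₁, F x ∈ U₂) {G : Module.End k P}
    (hG : ι₂ ∘ₗ G = F ∘ₗ ι₁) : U₁.comap ι₁ ≤ (U₁.comap ι₁).comap G := fun u hu =>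
  hU _ (by rw [← LinearMap.comp_apply, hι, ← LinearMap.comp_apply, hG]; exact hF _ hu)

lemma exists_mem_comap_eq (hU : ∀ z, M.a z ∈ U₂ → z ∈ U₁) (hι : M.a ∘ₗ ι₁ = ι₂)
    {F : M.V1 →ₗ[k] M.V2} (hF : ∀ x ∈ U₁, F x ∈ U₂) (hFι : LinearMap.range F ≤ LinearMap.range ι₂)
    {x : M.V1} (hx : x ∈ U₁) : ∃ u ∈ U₁.comap ι₁, ι₂ u = F x := by
  obtain ⟨u, hu⟩ := hFι ⟨x, rfl⟩
  exact ⟨u, hU _ (by rw [← LinearMap.comp_apply, hι, hu]; exact hF x hx), hu⟩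

lemma comap_ne_bot (hU : ∀ z, M.a z ∈ U₂ → z ∈ U₁) (hι : M.a ∘ₗ ι₁ = ι₂)
    (hUb : ∀ x ∈ U₁, M.b x ∈ U₂) (hUc : ∀ x ∈ U₁, M.c x ∈ U₂)
    (hb : LinearMap.range M.b ≤ LinearMap.range ι₂) (hc : LinearMap.range M.c ≤ LinearMap.range ι₂)
    (hbc : ∀ x ∈ U₁, M.b x = 0 → M.c x = 0 → x = 0) (hU₁ : U₁ ≠ ⊥) : U₁.comap ι₁ ≠ ⊥ := by
  obtain ⟨x, hx, hx0⟩ := Submodule.exists_mem_ne_zero_of_ne_bot hU₁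
  have key : ∀ {F : M.V1 →ₗ[k] M.V2}, (∀ x ∈ U₁, F x ∈ U₂) →
      LinearMap.range F ≤ LinearMap.range ι₂ → F x ≠ 0 → U₁.comap ι₁ ≠ ⊥ := fun hF hFι hFx => by
    obtain ⟨u, hu, hux⟩ := exists_mem_comap_eq hU hι hF hFι hx
    exact (Submodule.ne_bot_iff _).2 ⟨u, hu, fun h0 => hFx (by rw [← hux, h0, map_zero])⟩
  by_cases hbx : M.b x = 0
  · exact key hUc hc fun hcx => hx0 (hbc x hx hbx hcx)
  · exact key hUb hb hbx

end Preimage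

theorem exists_isHom3_repX_restrict_of_repXTensor {W : Type} [AddCommGroup W] [Module k W]
    [FiniteDimensional k W] {n : ℕ} (hn : 1 ≤ n) {l : Fin (n + 1) → k} (hl : Function.Injective l)
    {M : Rep3 k} [FiniteDimensional k M.V1] {ι₁ : (Fin (n + 1) → W) →ₗ[k] M.V1}
    {ι₂ : (Fin (n + 1) → W) →ₗ[k] M.V2} (hι : IsHom3 k (repXTensor l W) M ι₁ ι₂)
    (hι₁ : Function.Injective ι₁)
    (hb : LinearMap.range M.b ≤ LinearMap.range ι₂) (hc : LinearMap.range M.c ≤ LinearMap.range ι₂)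
    {U₁ : Submodule k M.V1} {U₂ : Submodule k M.V2} (hUa : ∀ x ∈ U₁, M.a x ∈ U₂)
    (hUb : ∀ x ∈ U₁, M.b x ∈ U₂) (hUc : ∀ x ∈ U₁, M.c x ∈ U₂) (hU : ∀ z, M.a z ∈ U₂ → z ∈ U₁)
    (hbc : ∀ x, M.b x = 0 → M.c x = 0 → x = 0) (hdim : finrank k U₁ = n + 2) :
    ∃ (j₁ : (Fin (n + 1) → k) →ₗ[k] U₁) (j₂ : (Fin (n + 1) → k) →ₗ[k] U₂),
      IsHom3 k (repX k _ l) (M.restrict hUa hUb hUc) j₁ j₂ ∧ Function.Injective j₁ ∧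
      LinearMap.range (M.restrict hUa hUb hUc).b ≤ LinearMap.range j₂ ∧
      LinearMap.range (M.restrict hUa hUb hUc).c ≤ LinearMap.range j₂ := by
  set V := U₁.comap ι₁
  have hιa : M.a ∘ₗ ι₁ = ι₂ := hι.1.symm
  have hV : V ≠ ⊥ := comap_ne_bot hU hιa hUb hUc hb hc (fun x _ => hbc x)
    (Submodule.one_le_finrank_iff.1 (by omega))
  have hdimV : finrank k V < 2 * (n + 1) := by
    have := Submodule.finrank_mono (Submodule.map_comap_le ι₁ U₁)
    rw [← (Submodule.equivMapOfInjective ι₁ hι₁ V).finrank_eq] at this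
    omega
  obtain ⟨w, hw, hVw⟩ := exists_eq_range_compLeft_toSpanSingleton hl
    (comap_le_comap_comap hU hιa hUb hι.2.1) (comap_le_comap_comap hU hιa hUc hι.2.2) hV hdimV
  set jw := (LinearMap.toSpanSingleton k W w).compLeft (Fin (n + 1))
  have hjwV : ∀ e, jw e ∈ V := fun e => hVw.ge ⟨e, rfl⟩
  have hj₂ : ∀ e, ι₂ (jw e) ∈ U₂ := fun e => hιa ▸ hUa _ (hjwV e)
  have hhom : ∀ {g : Module.End k (Fin (n + 1) → k)} {G : Module.End k (Fin (n + 1) → W)}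
      {F : M.V1 →ₗ[k] M.V2} (hF : ∀ x ∈ U₁, F x ∈ U₂), jw ∘ₗ g = G ∘ₗ jw →
      ι₂ ∘ₗ G = F ∘ₗ ι₁ → LinearMap.codRestrict U₂ (ι₂ ∘ₗ jw) hj₂ ∘ₗ g =
        F.restrict hF ∘ₗ LinearMap.codRestrict U₁ (ι₁ ∘ₗ jw) hjwV := fun {g G F} hF hg hG => by
    refine LinearMap.ext fun e => Subtype.ext ?_
    change (ι₂ ∘ₗ (jw ∘ₗ g)) e = (F ∘ₗ ι₁ ∘ₗ jw) e
    rw [hg, ← LinearMap.comp_assoc, hG, LinearMap.comp_assoc]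
  have hrange : ∀ {F : M.V1 →ₗ[k] M.V2} (hF : ∀ x ∈ U₁, F x ∈ U₂),
      LinearMap.range F ≤ LinearMap.range ι₂ →
      LinearMap.range (F.restrict hF) ≤ LinearMap.range (LinearMap.codRestrict U₂ (ι₂ ∘ₗ jw) hj₂) :=
    fun {F} hF hFι => by
      rintro _ ⟨x, rfl⟩
      obtain ⟨u, hu, hux⟩ := exists_mem_comap_eq hU hιa hF hFι x.2
      rw [hVw] at hu
      obtain ⟨e, rfl⟩ := hu
      exact ⟨e, Subtype.ext hux⟩
  refine ⟨_, _, ⟨hhom hUa rfl hι.1, hhom hUb ?_ hι.2.1,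
    hhom hUc rfl hι.2.2⟩, fun e e' h => ?_, hrange hUb hb, hrange hUc hc⟩
  · exact LinearMap.ext fun e => funext fun i => mul_smul (l i) (e i) w
  · exact funext fun i => smul_left_injective k hw (congrFun (hι₁ (congrArg Subtype.val h)) i)

theorem exists_isHom3_repX_restrict {n : ℕ} (hn : 1 ≤ n) {l : Fin (n + 1) → k}
    (hl : Function.Injective l) {M : Rep3 k} [FiniteDimensional k M.V1] {m : ℕ}
    {ι₁ : (pow3 k (repX k (n + 1) l) m).V1 →ₗ[k] M.V1}
    {ι₂ : (pow3 k (repX k (n + 1) l) m).V2 →ₗ[k] M.V2}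
    (hι : IsHom3 k (pow3 k (repX k (n + 1) l) m) M ι₁ ι₂) (hι₁ : Function.Injective ι₁)
    (hb : LinearMap.range M.b ≤ LinearMap.range ι₂) (hc : LinearMap.range M.c ≤ LinearMap.range ι₂)
    {U₁ : Submodule k M.V1} {U₂ : Submodule k M.V2} (hUa : ∀ x ∈ U₁, M.a x ∈ U₂)
    (hUb : ∀ x ∈ U₁, M.b x ∈ U₂) (hUc : ∀ x ∈ U₁, M.c x ∈ U₂) (hU : ∀ z, M.a z ∈ U₂ → z ∈ U₁)
    (hbc : ∀ x, M.b x = 0 → M.c x = 0 → x = 0) (hdim : finrank k U₁ = n + 2) :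
    ∃ (j₁ : (Fin (n + 1) → k) →ₗ[k] U₁) (j₂ : (Fin (n + 1) → k) →ₗ[k] U₂),
      IsHom3 k (repX k _ l) (M.restrict hUa hUb hUc) j₁ j₂ ∧ Function.Injective j₁ ∧
      LinearMap.range (M.restrict hUa hUb hUc).b ≤ LinearMap.range j₂ ∧
      LinearMap.range (M.restrict hUa hUb hUc).c ≤ LinearMap.range j₂ := by
  have hrange := LinearEquiv.range_comp (LinearEquiv.piComm k (Fin (n + 1)) (Fin m) k) ι₂
  exact exists_isHom3_repX_restrict_of_repXTensor hn hl (hι.comp (isHom3_piComm l m))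
    (hι₁.comp (LinearEquiv.piComm k _ _ k).injective) (hrange ▸ hb) (hrange ▸ hc) hUa hUb hUc hU
    hbc hdim

end Rep3

theorem stmt9_general (k : Type) [Field k] (n : ℕ) (hn : 2 ≤ n) (l : Fin n → k)
    (hinj : Function.Injective l)
    (M : Rep3 k) [FiniteDimensional k M.V1] [FiniteDimensional k M.V2]
    (a b : ℕ)
    (ι₁ : (pow3 k (repX k n l) a).V1 →ₗ[k] M.V1)
    (ι₂ : (pow3 k (repX k n l) a).V2 →ₗ[k] M.V2)
    (hι : IsHom3 k (pow3 k (repX k n l) a) M ι₁ ι₂)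
    (hι1 : Function.Injective ι₁) (hι2 : Function.Injective ι₂)
    (π₁ : M.V1 →ₗ[k] (pow3 k (repY k) b).V1)
    (π₂ : M.V2 →ₗ[k] (pow3 k (repY k) b).V2)
    (hπ : IsHom3 k M (pow3 k (repY k) b) π₁ π₂)
    (hexact1 : LinearMap.ker π₁ = LinearMap.range ι₁)
    (hexact2 : LinearMap.ker π₂ = LinearMap.range ι₂)
    -- M is E-reduced: Y is not (isomorphic to) a subrepresentation of M
    (hred : ¬ ∃ (g₁ : (repY k).V1 →ₗ[k] M.V1) (g₂ : (repY k).V2 →ₗ[k] M.V2),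
      IsHom3 k (repY k) M g₁ g₂ ∧ Function.Injective g₁ ∧ Function.Injective g₂)
    -- U is a subrepresentation of M of dimension vector (n+1, n+1)
    (U₁ : Submodule k M.V1) (U₂ : Submodule k M.V2)
    (hUa : ∀ x ∈ U₁, M.a x ∈ U₂) (hUb : ∀ x ∈ U₁, M.b x ∈ U₂)
    (hUc : ∀ x ∈ U₁, M.c x ∈ U₂)
    (hd1 : Module.finrank k U₁ = n + 1) (hd2 : Module.finrank k U₂ = n + 1) :
    -- U is indecomposable: every idempotent endomorphism of U is 0 or the identity
    (∀ (e₁ : U₁ →ₗ[k] U₁) (e₂ : U₂ →ₗ[k] U₂),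
      e₂.comp (M.a.restrict hUa) = (M.a.restrict hUa).comp e₁ →
      e₂.comp (M.b.restrict hUb) = (M.b.restrict hUb).comp e₁ →
      e₂.comp (M.c.restrict hUc) = (M.c.restrict hUc).comp e₁ →
      e₁.comp e₁ = e₁ → e₂.comp e₂ = e₂ →
      (e₁ = 0 ∧ e₂ = 0) ∨ (e₁ = LinearMap.id ∧ e₂ = LinearMap.id)) ∧
    -- U fits in an exact sequence 0 → X → U → Y → 0
    (∃ (j₁ : (repX k n l).V1 →ₗ[k] U₁) (j₂ : (repX k n l).V2 →ₗ[k] U₂)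
       (q₁ : U₁ →ₗ[k] (repY k).V1) (q₂ : U₂ →ₗ[k] (repY k).V2),
      j₂.comp (repX k n l).a = (M.a.restrict hUa).comp j₁ ∧
      j₂.comp (repX k n l).b = (M.b.restrict hUb).comp j₁ ∧
      j₂.comp (repX k n l).c = (M.c.restrict hUc).comp j₁ ∧
      q₂.comp (M.a.restrict hUa) = (repY k).a.comp q₁ ∧
      q₂.comp (M.b.restrict hUb) = (repY k).b.comp q₁ ∧
      q₂.comp (M.c.restrict hUc) = (repY k).c.comp q₁ ∧
      Function.Injective j₁ ∧ Function.Injective j₂ ∧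
      Function.Surjective q₁ ∧ Function.Surjective q₂ ∧
      LinearMap.ker q₁ = LinearMap.range j₁ ∧
      LinearMap.ker q₂ = LinearMap.range j₂) := by
  obtain ⟨N, rfl⟩ : ∃ N, n = N + 1 := ⟨n - 1, by omega⟩
  have ha : Function.Injective M.a := Rep3.a_injective_of_exact hι hι2 hπ hexact1
    (Rep3.pow3_a_injective Function.injective_id a) (Rep3.pow3_a_injective Function.injective_id b)
  have hU : Function.Bijective (M.restrict hUa hUb hUc).a :=
    Rep3.restrict_a_bijective ha (hd1.trans hd2.symm)
  have hbc : ∀ v, M.b v = 0 → M.c v = 0 → v = 0 :=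
    fun _ => Rep3.eq_zero_of_b_eq_zero_of_c_eq_zero hred ha
  obtain ⟨j₁, j₂, hj, hj₁, hb, hc⟩ := Rep3.exists_isHom3_repX_restrict (by omega) hinj hι hι1
    (hexact2 ▸ Rep3.range_b_le_of_isHom3_pow3_repY hπ)
    (hexact2 ▸ Rep3.range_c_le_of_isHom3_pow3_repY hπ) hUa hUb hUc
    (fun _ => Rep3.mem_of_a_mem ha hU.2) hbc hd1
  have hbcU : ∀ x, (M.restrict hUa hUb hUc).b x = 0 → (M.restrict hUa hUb hUc).c x = 0 → x = 0 :=
    fun x hb hc => Subtype.ext (hbc x.1 (congrArg Subtype.val hb) (congrArg Subtype.val hc))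
  refine ⟨fun e₁ e₂ hea heb hec he₁ _ => Rep3.isHom3_idempotent_eq_zero_or_id hU hinj hj hj₁ hb hc
    hbcU ⟨hea, heb, hec⟩ he₁, ?_⟩
  have : FiniteDimensional k (M.restrict hUa hUb hUc).V1 := inferInstanceAs (FiniteDimensional k U₁)
  obtain ⟨q₁, q₂, hq, hj₂, hq₁, hq₂, hk₁, hk₂⟩ :=
    Rep3.exists_exact_of_isHom3_repX hU hj hj₁ hb hc hd1
  exact ⟨j₁, j₂, q₁, q₂, hj.1, hj.2.1, hj.2.2, hq.1, hq.2.1, hq.2.2, hj₁, hj₂, hq₁, hq₂, hk₁, hk₂⟩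

theorem stmt9 (k : Type) [Field k] (n : ℕ) (hn : 2 ≤ n) (l : Fin n → k)
    (hne : ∀ i, l i ≠ 0) (hinj : Function.Injective l)
    (M : Rep3 k) [FiniteDimensional k M.V1] [FiniteDimensional k M.V2]
    (a b : ℕ)
    (ι₁ : (pow3 k (repX k n l) a).V1 →ₗ[k] M.V1)
    (ι₂ : (pow3 k (repX k n l) a).V2 →ₗ[k] M.V2)
    (hι : IsHom3 k (pow3 k (repX k n l) a) M ι₁ ι₂)
    (hι1 : Function.Injective ι₁) (hι2 : Function.Injective ι₂)
    (π₁ : M.V1 →ₗ[k] (pow3 k (repY k) b).V1)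
    (π₂ : M.V2 →ₗ[k] (pow3 k (repY k) b).V2)
    (hπ : IsHom3 k M (pow3 k (repY k) b) π₁ π₂)
    (hπ1 : Function.Surjective π₁) (hπ2 : Function.Surjective π₂)
    (hexact1 : LinearMap.ker π₁ = LinearMap.range ι₁)
    (hexact2 : LinearMap.ker π₂ = LinearMap.range ι₂)
    -- M is E-reduced: Y is not (isomorphic to) a subrepresentation of M
    (hred : ¬ ∃ (g₁ : (repY k).V1 →ₗ[k] M.V1) (g₂ : (repY k).V2 →ₗ[k] M.V2),
      IsHom3 k (repY k) M g₁ g₂ ∧ Function.Injective g₁ ∧ Function.Injective g₂)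
    -- U is a subrepresentation of M of dimension vector (n+1, n+1)
    (U₁ : Submodule k M.V1) (U₂ : Submodule k M.V2)
    (hUa : ∀ x ∈ U₁, M.a x ∈ U₂) (hUb : ∀ x ∈ U₁, M.b x ∈ U₂)
    (hUc : ∀ x ∈ U₁, M.c x ∈ U₂)
    (hd1 : Module.finrank k U₁ = n + 1) (hd2 : Module.finrank k U₂ = n + 1) :
    -- U is indecomposable: every idempotent endomorphism of U is 0 or the identity
    (∀ (e₁ : U₁ →ₗ[k] U₁) (e₂ : U₂ →ₗ[k] U₂),
      e₂.comp (M.a.restrict hUa) = (M.a.restrict hUa).comp e₁ →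
      e₂.comp (M.b.restrict hUb) = (M.b.restrict hUb).comp e₁ →
      e₂.comp (M.c.restrict hUc) = (M.c.restrict hUc).comp e₁ →
      e₁.comp e₁ = e₁ → e₂.comp e₂ = e₂ →
      (e₁ = 0 ∧ e₂ = 0) ∨ (e₁ = LinearMap.id ∧ e₂ = LinearMap.id)) ∧
    -- U fits in an exact sequence 0 → X → U → Y → 0
    (∃ (j₁ : (repX k n l).V1 →ₗ[k] U₁) (j₂ : (repX k n l).V2 →ₗ[k] U₂)
       (q₁ : U₁ →ₗ[k] (repY k).V1) (q₂ : U₂ →ₗ[k] (repY k).V2),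
      j₂.comp (repX k n l).a = (M.a.restrict hUa).comp j₁ ∧
      j₂.comp (repX k n l).b = (M.b.restrict hUb).comp j₁ ∧
      j₂.comp (repX k n l).c = (M.c.restrict hUc).comp j₁ ∧
      q₂.comp (M.a.restrict hUa) = (repY k).a.comp q₁ ∧
      q₂.comp (M.b.restrict hUb) = (repY k).b.comp q₁ ∧
      q₂.comp (M.c.restrict hUc) = (repY k).c.comp q₁ ∧
      Function.Injective j₁ ∧ Function.Injective j₂ ∧
      Function.Surjective q₁ ∧ Function.Surjective q₂ ∧
      LinearMap.ker q₁ = LinearMap.range j₁ ∧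
      LinearMap.ker q₂ = LinearMap.range j₂) :=
  stmt9_general k n hn l hinj M a b ι₁ ι₂ hι hι1 hι2 π₁ π₂ hπ hexact1 hexact2 hred U₁ U₂ hUa hUb hUc
    hd1 hd2
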